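/- arXiv:1206.3804 — 3 statements merged into one kernel-verified Lean document; each statement's English description precedes it below -/
import Mathlib

section
/- For positive reals M, α and positive integer r, ⌈(M - α + α·⌈(M-α)/(r·α)⌉)/α⌉ ≥ ⌈M/α⌉ + ⌈M/(r·α)⌉ - 2. -/
/-! Dividing by `α` splits the integer `⌈(M - α) / (r * α)⌉` off the right-hand ceiling, leaving
`⌈M / α⌉ - 1`; and replacing `M` by `M - α` lowers `M / (r * α)` by `1 / r ≤ 1`, so it lowers its
ceiling by at most one. -/

lemma Int.ceil_le_ceil_add_one_of_le_add_one {K : Type*} [Ring K] [LinearOrder K]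
    [IsOrderedRing K] [FloorRing K] {x y : K} (h : x ≤ y + 1) : ⌈x⌉ ≤ ⌈y⌉ + 1 := by
  simpa only [Int.ceil_add_one] using Int.ceil_le_ceil h

lemma div_mul_le_sub_div_mul_add_one {K : Type*} [Field K] [LinearOrder K] [IsStrictOrderedRing K]
    {M α r : K} (hα : α ≠ 0) (hr : 1 ≤ r) :
    M / (r * α) ≤ (M - α) / (r * α) + 1 := by
  rw [sub_div, div_mul_cancel_right₀ hα]
  linarith [inv_le_one_of_one_le₀ hr]

theorem stmt_6_general (M α : ℝ) (r : ℕ) (hα : 0 < α) (hr : 0 < r) :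
    ⌈M / α⌉ + ⌈M / (r * α)⌉ - 2 ≤ ⌈(M - α + α * (⌈(M - α) / (r * α)⌉ : ℝ)) / α⌉ := by
  have hsplit : (M - α + α * (⌈(M - α) / (r * α)⌉ : ℝ)) / α
      = M / α - 1 + (⌈(M - α) / (r * α)⌉ : ℝ) := by
    field_simp
  have hceil : ⌈M / (r * α)⌉ ≤ ⌈(M - α) / (r * α)⌉ + 1 :=
    Int.ceil_le_ceil_add_one_of_le_add_one
      (div_mul_le_sub_div_mul_add_one hα.ne' (by exact_mod_cast hr))
  rw [hsplit, Int.ceil_add_intCast, Int.ceil_sub_one]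
  omega

/-- For positive reals `M`, `α` with `α ≤ M` and a positive integer `r`,
`⌈(M - α + α·⌈(M-α)/(r·α)⌉)/α⌉ ≥ ⌈M/α⌉ + ⌈M/(r·α)⌉ - 2`. -/
theorem stmt_6 (M α : ℝ) (r : ℕ) (hM : 0 < M) (hα : 0 < α) (hαM : α ≤ M) (hr : 0 < r) :
    ⌈M / α⌉ + ⌈M / (r * α)⌉ - 2 ≤ ⌈(M - α + α * (⌈(M - α) / (r * α)⌉ : ℝ)) / α⌉ :=
  stmt_6_general M α r hα hr
end

section
/- Let n, r, d be positive integers with r + 1 ≤ n − d + 1 and (r+1) | n. Then n − d + 1 − ⌊(n−d+1)/(r+1)⌋ is the minimum over all subsets F ⊆ [n] of size n−d+1 of the quantity (number of complete (r+1)-blocks of the partition of [n] into n/(r+1) consecutive blocks contained in F)·r + (number of elements of F not in any fully-contained block). -/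
def completeBlocks (n r : ℕ) (F : Finset (Fin n)) : Finset ℕ :=
  (Finset.range (n / (r + 1))).filter
    (fun b => ∀ x : Fin n, (x : ℕ) / (r + 1) = b → x ∈ F)

def cutCost (n r : ℕ) (F : Finset (Fin n)) : ℕ :=
  (completeBlocks n r F).card * r +
    (F.filter (fun x : Fin n => (x : ℕ) / (r + 1) ∉ completeBlocks n r F)).card

lemma filterCardAux (n : ℕ) (P : ℕ → Prop) [DecidablePred P] :
    (Finset.univ.filter (fun x : Fin n => P (x:ℕ))).card
      = ((Finset.range n).filter P).card := by
  rw [← Finset.card_map Fin.valEmbedding, Finset.map_filter' ]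
  congr 1
  rw [Fin.map_valEmbedding_univ]
  ext x
  simp only [Finset.mem_filter, Finset.mem_Iio, Finset.mem_range, Fin.exists_iff]
  constructor
  · rintro ⟨hx, y, hy, hP, rfl⟩; exact ⟨hx, hP⟩
  · rintro ⟨hx, hP⟩; exact ⟨hx, x, hx, hP, rfl⟩

lemma rangeDivFilter (m r b : ℕ) (hm : (b+1)*(r+1) ≤ m) :
    (Finset.range m).filter (fun x => x / (r+1) = b) =
      Finset.Ico (b*(r+1)) ((b+1)*(r+1)) := by
  ext x
  simp only [Finset.mem_filter, Finset.mem_range, Finset.mem_Ico]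
  constructor
  · rintro ⟨hx, rfl⟩
    refine ⟨Nat.div_mul_le_self _ _, ?_⟩
    rw [← Nat.div_lt_iff_lt_mul (Nat.succ_pos r)]
    exact Nat.lt_succ_self _
  · rintro ⟨h1, h2⟩
    exact ⟨lt_of_lt_of_le h2 hm, Nat.div_eq_of_lt_le h1 h2⟩

lemma blockCard (n r b : ℕ) (hdiv : (r+1) ∣ n) (hb : b < n / (r+1)) :
    (Finset.univ.filter (fun x : Fin n => (x:ℕ)/(r+1) = b)).card = r + 1 := by
  have hn : (b+1) * (r+1) ≤ n := by
    calc (b+1)*(r+1) ≤ (n/(r+1))*(r+1) := Nat.mul_le_mul_right _ hb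
    _ = n := Nat.div_mul_cancel hdiv
  rw [filterCardAux n (fun x => x/(r+1) = b), rangeDivFilter n r b hn,
    Nat.card_Ico]
  ring_nf
  omega

lemma cb_mul_le (n r : ℕ) (F : Finset (Fin n)) (hdiv : (r+1) ∣ n) :
    (F.filter (fun x : Fin n => (x:ℕ)/(r+1) ∈ completeBlocks n r F)).card
      = (completeBlocks n r F).card * (r+1) := by
  have h1 : F.filter (fun x : Fin n => (x:ℕ)/(r+1) ∈ completeBlocks n r F)
      = (completeBlocks n r F).biUnion
        (fun b => Finset.univ.filter (fun x : Fin n => (x:ℕ)/(r+1) = b)) := by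
    ext x
    simp only [Finset.mem_filter, Finset.mem_biUnion, Finset.mem_univ, true_and]
    constructor
    · rintro ⟨hxF, hcb⟩; exact ⟨_, hcb, rfl⟩
    · rintro ⟨b, hb, hxb⟩
      have hb' := hb
      simp only [completeBlocks, Finset.mem_filter, Finset.mem_range] at hb'
      exact ⟨hb'.2 x hxb, hxb ▸ hb⟩
  rw [h1, Finset.card_biUnion]
  · have hsum : ∑ b ∈ completeBlocks n r F,
        (Finset.univ.filter (fun x : Fin n => (x:ℕ)/(r+1) = b)).card
        = ∑ _b ∈ completeBlocks n r F, (r+1) :=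
      Finset.sum_congr rfl (fun b hb => blockCard n r b hdiv
        (Finset.mem_range.mp (Finset.mem_filter.mp hb).1))
    rw [hsum, Finset.sum_const, smul_eq_mul]
  · intro a ha b hb hab
    simp only [Finset.disjoint_left, Finset.mem_filter, Finset.mem_univ, true_and]
    rintro x rfl h
    exact hab h

lemma cutCost_eq (n r : ℕ) (F : Finset (Fin n)) (hdiv : (r+1) ∣ n) :
    cutCost n r F = F.card - (completeBlocks n r F).card ∧
      (completeBlocks n r F).card * (r+1) ≤ F.card := by
  have key := cb_mul_le n r F hdiv
  have hsplit := Finset.card_filter_add_card_filter_not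
    (s := F) (p := fun x : Fin n => (x:ℕ)/(r+1) ∈ completeBlocks n r F)
  have hmul : (completeBlocks n r F).card * (r+1)
      = (completeBlocks n r F).card * r + (completeBlocks n r F).card := by ring
  have hle : (completeBlocks n r F).card * (r+1) ≤ F.card := by
    rw [← key]; exact Finset.card_filter_le _ _
  refine ⟨?_, hle⟩
  unfold cutCost
  omega

/-- For `r + 1 ≤ n - d + 1` and `(r+1) ∣ n`, the quantity
`n - d + 1 - ⌊(n-d+1)/(r+1)⌋` is the minimum over all subsets `F ⊆ [n]` of size
`n - d + 1` of the cut cost of `F`. -/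
theorem stmt_9 (n r d : ℕ) (hn : 0 < n) (hr : 0 < r) (hd : 0 < d) (hdn : d ≤ n)
    (hrd : r + 1 ≤ n - d + 1) (hdiv : (r + 1) ∣ n) :
    IsLeast {c : ℕ | ∃ F : Finset (Fin n), F.card = n - d + 1 ∧ cutCost n r F = c}
      (n - d + 1 - (n - d + 1) / (r + 1)) := by
  set m := n - d + 1 with hm
  have hmn : m ≤ n := by omega
  constructor
  · -- membership: F = {x : Fin n | x < m}
    set F := Finset.univ.filter (fun x : Fin n => (x:ℕ) < m) with hF
    have hcard : F.card = m := by
      rw [hF, filterCardAux n (fun x => x < m)]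
      have : (Finset.range n).filter (fun x => x < m) = Finset.range m := by
        ext x; simp only [Finset.mem_filter, Finset.mem_range]
        exact ⟨fun h => h.2, fun h => ⟨lt_of_lt_of_le h hmn, h⟩⟩
      rw [this, Finset.card_range]
    refine ⟨F, hcard, ?_⟩
    have hcb : completeBlocks n r F = Finset.range (m / (r+1)) := by
      ext b
      simp only [completeBlocks, Finset.mem_filter, Finset.mem_range, hF,
        Finset.mem_univ, true_and]
      constructor
      · rintro ⟨hb, hall⟩
        have hbn : (b+1)*(r+1) ≤ n := by
          calc (b+1)*(r+1) ≤ (n/(r+1))*(r+1) := Nat.mul_le_mul_right _ hb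
          _ = n := Nat.div_mul_cancel hdiv
        have hx : (b*(r+1)+r) < n := by nlinarith
        have hdivx : (b*(r+1)+r)/(r+1) = b :=
          Nat.div_eq_of_lt_le (by omega) (by nlinarith)
        have hlt : b*(r+1)+r < m := hall ⟨b*(r+1)+r, hx⟩ hdivx
        have h' : (b+1)*(r+1) ≤ m := by nlinarith
        exact lt_of_lt_of_le (Nat.lt_succ_self b)
          ((Nat.le_div_iff_mul_le (Nat.succ_pos r)).mpr h')
      · intro hb
        have hbm : (b+1)*(r+1) ≤ m :=
          (Nat.le_div_iff_mul_le (Nat.succ_pos r)).mp (Nat.succ_le_of_lt hb)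
        refine ⟨lt_of_lt_of_le hb (Nat.div_le_div_right hmn), fun x hx => ?_⟩
        have : (x:ℕ) < (b+1)*(r+1) := by
          rw [← Nat.div_lt_iff_lt_mul (Nat.succ_pos r), hx]
          exact Nat.lt_succ_self _
        exact lt_of_lt_of_le this hbm
    obtain ⟨heq, hle⟩ := cutCost_eq n r F hdiv
    rw [heq, hcard, hcb, Finset.card_range]
  · -- lower bound
    rintro c ⟨F, hFcard, rfl⟩
    obtain ⟨heq, hle⟩ := cutCost_eq n r F hdiv
    rw [heq, hFcard]
    have : (completeBlocks n r F).card ≤ m / (r+1) := by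
      rw [Nat.le_div_iff_mul_le (Nat.succ_pos r)]
      rw [hFcard] at hle; exact hle
    omega
end

section
/- Let M, α be positive reals, r a positive integer, and define d = n − ⌈M/α⌉ − ⌈M/(r·α)⌉ + 2 for an integer n with n ≥ ⌈M/α⌉ + ⌈M/(r·α)⌉ − 1. Then (n − d + 1 − ⌊(n−d+1)/(r+1)⌋)·α = ⌈M/α⌉·α, and in particular this min-cut capacity is at least M. -/
/-- With `d = n - ⌈M/α⌉ - ⌈M/(r·α)⌉ + 2` and `n` large enough, the min-cut
capacity satisfies `(n - d + 1 - ⌊(n-d+1)/(r+1)⌋)·α = ⌈M/α⌉·α ≥ M`. -/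
theorem stmt_10 (M α : ℝ) (r : ℕ) (n d : ℤ) (hM : 0 < M) (hα : 0 < α) (hr : 0 < r)
    (hn : ⌈M / α⌉ + ⌈M / (r * α)⌉ - 1 ≤ n)
    (hd : d = n - ⌈M / α⌉ - ⌈M / (r * α)⌉ + 2) :
    (((n : ℝ) - d + 1) - (⌊((n : ℝ) - d + 1) / (r + 1)⌋ : ℝ)) * α = (⌈M / α⌉ : ℝ) * α ∧
      M ≤ (((n : ℝ) - d + 1) - (⌊((n : ℝ) - d + 1) / (r + 1)⌋ : ℝ)) * α := by
  set A : ℤ := ⌈M / α⌉ with hA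
  set B : ℤ := ⌈M / (r * α)⌉ with hB
  have hrR : (0 : ℝ) < (r : ℝ) := by exact_mod_cast hr
  have hrα : (0 : ℝ) < (r : ℝ) * α := mul_pos hrR hα
  -- M/α ≤ A
  have h1 : M / α ≤ (A : ℝ) := Int.le_ceil _
  -- B - 1 < M/(rα)
  have h2 : (B : ℝ) - 1 < M / ((r : ℝ) * α) := by
    have := Int.ceil_lt_add_one (M / ((r : ℝ) * α))
    push_cast at this ⊢
    linarith
  have h3 : M / ((r : ℝ) * α) ≤ (B : ℝ) := Int.le_ceil _
  -- A ≤ r * B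
  have hAB2 : A ≤ (r : ℤ) * B := by
    rw [hA, Int.ceil_le]
    have : M ≤ (B : ℝ) * ((r : ℝ) * α) := (div_le_iff₀ hrα).mp h3
    rw [div_le_iff₀ hα]
    push_cast
    nlinarith
  -- r * (B - 1) < A
  have hAB1 : (r : ℤ) * (B - 1) < A := by
    have hM2 : ((B : ℝ) - 1) * ((r : ℝ) * α) < M := (lt_div_iff₀ hrα).mp h2
    have : ((r : ℤ) * (B - 1) : ℝ) < M / α := by
      push_cast
      rw [lt_div_iff₀ hα]
      nlinarith
    have h4 : ((r : ℤ) * (B - 1) : ℝ) < (A : ℝ) := lt_of_lt_of_le this h1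
    exact_mod_cast h4
  -- n - d + 1 = A + B - 1
  have hnd : (n : ℝ) - d + 1 = ((A + B - 1 : ℤ) : ℝ) := by
    have : n - d + 1 = A + B - 1 := by omega
    push_cast [← this]; ring
  have hfloor : ⌊((n : ℝ) - d + 1) / (r + 1)⌋ = B - 1 := by
    rw [hnd, Int.floor_eq_iff]
    constructor
    · rw [le_div_iff₀ (by positivity : (0:ℝ) < (r:ℝ)+1)]
      push_cast
      have : (r : ℝ) * ((B : ℝ) - 1) < A := by exact_mod_cast hAB1
      nlinarith
    · rw [div_lt_iff₀ (by positivity : (0:ℝ) < (r:ℝ)+1)]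
      push_cast
      have : (A : ℝ) ≤ (r : ℝ) * B := by exact_mod_cast hAB2
      nlinarith
  have hkey : (((n : ℝ) - d + 1) - (⌊((n : ℝ) - d + 1) / (r + 1)⌋ : ℝ)) = (A : ℝ) := by
    rw [hfloor, hnd]; push_cast; ring
  refine ⟨by rw [hkey], ?_⟩
  rw [hkey]
  calc M = (M / α) * α := by field_simp
    _ ≤ (A : ℝ) * α := by nlinarith
end
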